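/- Let H be a real inner product space with inner product a(·,·). For nonempty subspaces X, Y of H, define dist_a(X,Y) = sup over unit vectors u in X of inf over v in Y of ||u−v||_a. If X is spanned by vectors x_1,…,x_d that are pairwise orthogonal with respect to a(·,·) and all nonzero, then for every nonzero x in X, dist_a(x, Y)^2 ≤ Σ_{i=1}^d dist_a(x_i, Y)^2, where dist_a of a vector to a subspace means the distance of its span to Y. -/

import Mathlib

open scoped BigOperators

variable {H : Type*}

/-- Distance from subspace `X` to subspace `Y` with respect to the norm induced by the
inner product: supremum over unit vectors of `X` of the distance to `Y`. -/
noncomputable def distSub [NormedAddCommGroup H] [InnerProductSpace ℝ H]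
    (X Y : Submodule ℝ H) : ℝ :=
  ⨆ u : {u : H // u ∈ X ∧ ‖u‖ = 1}, ⨅ v : Y, ‖u.1 - (v : H)‖

/-- Distance from a vector to a subspace: distance of its span to the subspace. -/
noncomputable def distVec [NormedAddCommGroup H] [InnerProductSpace ℝ H]
    (u : H) (Y : Submodule ℝ H) : ℝ :=
  distSub (Submodule.span ℝ {u}) Y
/-!
The distance from a nonzero vector `w` to `Y` is `‖[w]‖ / ‖w‖`, where `[w]` is the class of `w` in
the seminormed quotient `H ⧸ Y`. Writing `u = ∑ cᵢ xᵢ`, the triangle inequality in the quotient gives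
`‖[u]‖ ≤ ∑ |cᵢ| ‖xᵢ‖ · dist(xᵢ, Y)`, and Cauchy–Schwarz bounds this by
`√(∑ cᵢ² ‖xᵢ‖²) · √(∑ dist(xᵢ, Y)²)`, whose first factor is `‖u‖` by Pythagoras.
-/

open Metric

theorem Submodule.Quotient.norm_mk_eq_iInf {R M : Type*} [Ring R] [SeminormedAddCommGroup M]
    [Module R M] (S : Submodule R M) (x : M) :
    ‖(Submodule.Quotient.mk x : M ⧸ S)‖ = ⨅ v : S, ‖x - v‖ := by
  rw [show ‖(Submodule.Quotient.mk x : M ⧸ S)‖ = infDist x S from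
    QuotientAddGroup.norm_mk (S := S.toAddSubgroup) x, infDist_eq_iInf]
  simp only [dist_eq_norm]
  rfl

section

variable [NormedAddCommGroup H] [InnerProductSpace ℝ H]

theorem norm_sum_sq_of_pairwise_inner_eq_zero {ι : Type*} (s : Finset ι) {v : ι → H}
    (hv : Pairwise fun i j => inner ℝ (v i) (v j) = (0 : ℝ)) :
    ‖∑ i ∈ s, v i‖ ^ 2 = ∑ i ∈ s, ‖v i‖ ^ 2 := by
  classical
  rw [← real_inner_self_eq_norm_sq, sum_inner]
  refine Finset.sum_congr rfl fun i hi => ?_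
  rw [inner_sum, Finset.sum_eq_single_of_mem i hi fun j _ hji => hv hji.symm,
    real_inner_self_eq_norm_sq]

/-- At `u = 0` both sides vanish: the span of `0` has no unit vectors, and `0 / 0 = 0`. -/
theorem distVec_eq_norm_mk_div_norm (u : H) (Y : Submodule ℝ H) :
    distVec u Y = ‖(Submodule.Quotient.mk u : H ⧸ Y)‖ / ‖u‖ := by
  unfold distVec distSub
  rcases eq_or_ne u 0 with rfl | hu
  · have : IsEmpty {z : H // z ∈ Submodule.span ℝ {(0 : H)} ∧ ‖z‖ = 1} :=
      ⟨fun ⟨z, hz, hz1⟩ => by simp_all⟩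
    simp
  have hunit : ∀ z ∈ Submodule.span ℝ {u}, ‖z‖ = 1 →
      ‖(Submodule.Quotient.mk z : H ⧸ Y)‖ = ‖(Submodule.Quotient.mk u : H ⧸ Y)‖ / ‖u‖ := by
    rintro _ hz hz1
    obtain ⟨c, rfl⟩ := Submodule.mem_span_singleton.1 hz
    rw [norm_smul, Real.norm_eq_abs] at hz1
    rw [Submodule.Quotient.mk_smul, norm_smul, Real.norm_eq_abs, eq_div_iff (norm_ne_zero_iff.2 hu)]
    linear_combination ‖(Submodule.Quotient.mk u : H ⧸ Y)‖ * hz1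
  have : Nonempty {z : H // z ∈ Submodule.span ℝ {u} ∧ ‖z‖ = 1} :=
    ⟨⟨‖u‖⁻¹ • u, Submodule.smul_mem _ _ (Submodule.mem_span_singleton_self u),
      norm_smul_inv_norm hu⟩⟩
  calc (⨆ z : {z : H // z ∈ Submodule.span ℝ {u} ∧ ‖z‖ = 1}, ⨅ v : Y, ‖z.1 - v‖)
      = ⨆ _ : {z : H // z ∈ Submodule.span ℝ {u} ∧ ‖z‖ = 1},
          ‖(Submodule.Quotient.mk u : H ⧸ Y)‖ / ‖u‖ :=
        iSup_congr fun z => by rw [← Submodule.Quotient.norm_mk_eq_iInf, hunit z.1 z.2.1 z.2.2]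
    _ = _ := ciSup_const

theorem norm_mk_eq_norm_mul_distVec (u : H) (Y : Submodule ℝ H) :
    ‖(Submodule.Quotient.mk u : H ⧸ Y)‖ = ‖u‖ * distVec u Y := by
  rcases eq_or_ne u 0 with rfl | hu
  · simp
  rw [distVec_eq_norm_mk_div_norm, mul_div_cancel₀ _ (norm_ne_zero_iff.2 hu)]

theorem distVec_sq_le_sum_of_mem_span {ι : Type*} [Fintype ι] {x : ι → H}
    (hx : Pairwise fun i j => inner ℝ (x i) (x j) = (0 : ℝ)) (Y : Submodule ℝ H) {u : H}
    (hu : u ∈ Submodule.span ℝ (Set.range x)) :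
    distVec u Y ^ 2 ≤ ∑ i, distVec (x i) Y ^ 2 := by
  obtain ⟨c, rfl⟩ := (Submodule.mem_span_range_iff_exists_fun ℝ).1 hu
  set D : ι → ℝ := fun i => distVec (x i) Y
  have hpyth : √(∑ i, (|c i| * ‖x i‖) ^ 2) = ‖∑ i, c i • x i‖ := by
    have hcx : Pairwise fun i j => inner ℝ (c i • x i) (c j • x j) = (0 : ℝ) := fun i j hij => by
      dsimp only
      rw [real_inner_smul_left, real_inner_smul_right, hx hij, mul_zero, mul_zero]
    simp only [← Real.norm_eq_abs, ← norm_smul]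
    rw [← norm_sum_sq_of_pairwise_inner_eq_zero _ hcx, Real.sqrt_sq (norm_nonneg _)]
  have hmk : ‖(Submodule.Quotient.mk (∑ i, c i • x i) : H ⧸ Y)‖ ≤
      ‖∑ i, c i • x i‖ * √(∑ i, D i ^ 2) :=
    calc ‖(Submodule.Quotient.mk (∑ i, c i • x i) : H ⧸ Y)‖
        = ‖∑ i, c i • (Submodule.Quotient.mk (x i) : H ⧸ Y)‖ := by
          rw [← Submodule.mkQ_apply, map_sum]
          simp only [map_smul, Submodule.mkQ_apply]
      _ ≤ ∑ i, |c i| * ‖(Submodule.Quotient.mk (x i) : H ⧸ Y)‖ := by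
          refine (norm_sum_le _ _).trans_eq (Finset.sum_congr rfl fun i _ => ?_)
          rw [norm_smul, Real.norm_eq_abs]
      _ = ∑ i, (|c i| * ‖x i‖) * D i := by
          simp only [norm_mk_eq_norm_mul_distVec, D, mul_assoc]
      _ ≤ ‖∑ i, c i • x i‖ * √(∑ i, D i ^ 2) := by
          rw [← hpyth]
          exact Real.sum_mul_le_sqrt_mul_sqrt _ _ _
  have hdist : distVec (∑ i, c i • x i) Y ≤ √(∑ i, D i ^ 2) := by
    rw [distVec_eq_norm_mk_div_norm]
    exact div_le_of_le_mul₀ (norm_nonneg _) (Real.sqrt_nonneg _) (by rwa [mul_comm])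
  calc distVec (∑ i, c i • x i) Y ^ 2 ≤ √(∑ i, D i ^ 2) ^ 2 := by
        gcongr
        rw [distVec_eq_norm_mk_div_norm]
        positivity
    _ = ∑ i, D i ^ 2 := Real.sq_sqrt (by positivity)

end

theorem stmt0_general [NormedAddCommGroup H] [InnerProductSpace ℝ H]
    (d : ℕ) (x : Fin d → H)
    (horth : ∀ i j, i ≠ j → (inner ℝ (x i) (x j) : ℝ) = 0)
    (X Y : Submodule ℝ H) (hX : X = Submodule.span ℝ (Set.range x))
    (u : H) (hu : u ∈ X) :
    distVec u Y ^ 2 ≤ ∑ i : Fin d, distVec (x i) Y ^ 2 :=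
  distVec_sq_le_sum_of_mem_span (fun i j => horth i j) Y (hX ▸ hu)

theorem stmt0 [NormedAddCommGroup H] [InnerProductSpace ℝ H]
    (d : ℕ) (x : Fin d → H) (hx0 : ∀ i, x i ≠ 0)
    (horth : ∀ i j, i ≠ j → (inner ℝ (x i) (x j) : ℝ) = 0)
    (X Y : Submodule ℝ H) (hX : X = Submodule.span ℝ (Set.range x))
    (u : H) (hu : u ∈ X) (hu0 : u ≠ 0) :
    distVec u Y ^ 2 ≤ ∑ i : Fin d, distVec (x i) Y ^ 2 :=
  stmt0_general d x horth X Y hX u hu
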